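/- Let k \ge 2 and C_k > 0. The series \sum_{q=1}^{\infty} |c_q(h)| \Big( \sum_{q_0 q_1 = q} \frac{\mu(q_1)^2 d_k(q)^{C_k}}{q_0 \varphi(q_1)} \Big)^2 converges for every nonzero integer h, and its value is O\big( \sum_{d \mid |h|} d^{-9/10} \big), uniformly in h. -/

import Mathlib

/-!
Expanding the coprimality condition by Möbius inversion turns `c_q(h)` into
`∑_{d ∣ q} μ(d) (q/d) [q/d ∣ h]`, so `|c_q(h)| ≤ ∑_{m ∣ (q, h)} m`. Since `q₁ ≤ φ(q₁) d(q₁)` and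
`d_k ≤ d^k`, the inner sum is at most `d(q)^{k C_k + 2} / q`, which the divisor bound
`d(n) ≪_ε n^ε` turns into `≪ q^{-19/20}`. Exchanging the order of summation then gives
`∑_q q^{-19/10} ∑_{m ∣ (q, h)} m = ζ(19/10) ∑_{m ∣ h} m^{-9/10}`.
-/

open Finset ArithmeticFunction
open scoped ArithmeticFunction.Moebius ArithmeticFunction.zeta

/-- `e(t) = exp(2πit)` -/
noncomputable def e (t : ℝ) : ℂ := Complex.exp (2 * Real.pi * Complex.I * t)

/-- The Ramanujan sum `c_q(h)`. -/
noncomputable def ramanujanSum (q : ℕ) (h : ℤ) : ℂ :=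
  ∑ a ∈ (Finset.Icc 1 q).filter (fun a => Nat.gcd a q = 1), e ((a : ℝ) * (h : ℝ) / (q : ℝ))

theorem e_natCast_mul (n : ℕ) (t : ℝ) : e (n * t) = e t ^ n := by
  rw [e, e, ← Complex.exp_nat_mul]
  push_cast
  ring_nf

theorem e_eq_one_iff (t : ℝ) : e t = 1 ↔ ∃ n : ℤ, t = n := by
  have h2πI : (2 * Real.pi * Complex.I : ℂ) ≠ 0 := by simp [Real.pi_ne_zero]
  rw [e, Complex.exp_eq_one_iff]
  refine exists_congr fun n => ⟨fun hn => ?_, fun hn => by rw [hn]; push_cast; ring⟩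
  rw [mul_comm _ (2 * Real.pi * Complex.I : ℂ)] at hn
  exact_mod_cast mul_left_cancel₀ h2πI hn

theorem sum_Icc_e_mul_div {m : ℕ} (hm : m ≠ 0) (h : ℤ) :
    ∑ b ∈ Icc 1 m, e (b * h / m) = if (m : ℤ) ∣ h then (m : ℂ) else 0 := by
  have hm' : (m : ℝ) ≠ 0 := Nat.cast_ne_zero.mpr hm
  set z := e (h / m)
  have hpow (b : ℕ) : e (b * h / m) = z ^ b := by rw [← e_natCast_mul, mul_div_assoc]
  have hz_iff : z = 1 ↔ (m : ℤ) ∣ h := by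
    rw [e_eq_one_iff]
    refine ⟨fun ⟨n, hn⟩ => ⟨n, ?_⟩, fun ⟨n, hn⟩ => ⟨n, ?_⟩⟩
    · rw [div_eq_iff hm'] at hn
      exact_mod_cast hn.trans (mul_comm _ _)
    · rw [hn]; push_cast; field_simp
  have hzm : z ^ m = 1 := by
    rw [← e_natCast_mul, e_eq_one_iff]
    exact ⟨h, by field_simp⟩
  have hshift : ∑ b ∈ Icc 1 m, z ^ b = z * ∑ b ∈ range m, z ^ b := by
    rw [mul_sum, ← Ico_add_one_right_eq_Icc, sum_Ico_eq_sum_range]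
    simp only [Nat.add_sub_cancel, pow_succ', add_comm 1]
  simp only [hpow, hshift]
  split_ifs with hdvd
  · simp [hz_iff.mpr hdvd]
  · have hgeom := geom_sum_mul z m
    rw [hzm, sub_self, mul_eq_zero] at hgeom
    rw [hgeom.resolve_right (sub_ne_zero.mpr (hz_iff.not.mpr hdvd)), mul_zero]

theorem sum_divisors_moebius {R : Type*} [Ring R] (n : ℕ) :
    ∑ d ∈ n.divisors, (μ d : R) = if n = 1 then 1 else 0 := by
  have h := congr($(coe_moebius_mul_coe_zeta (R := R)) n)
  simp only [coe_mul_zeta_apply, one_apply, intCoe_apply] at h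
  exact h

theorem sum_Icc_filter_dvd {M : Type*} [AddCommMonoid M] (f : ℕ → M) {d : ℕ} (hd : 0 < d)
    (n : ℕ) : ∑ a ∈ Icc 1 n with d ∣ a, f a = ∑ b ∈ Icc 1 (n / d), f (d * b) := by
  refine sum_nbij' (· / d) (d * ·) ?_ ?_ ?_ ?_ ?_
  · simp only [mem_filter, mem_Icc, and_imp]
    exact fun a ha han hda => ⟨Nat.div_pos (Nat.le_of_dvd ha hda) hd, Nat.div_le_div_right han⟩
  · simp only [mem_filter, mem_Icc, and_imp]
    refine fun b hb hbn => ⟨⟨Nat.mul_pos hd hb, ?_⟩, dvd_mul_right d b⟩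
    exact mul_comm d b ▸ (Nat.le_div_iff_mul_le hd).mp hbn
  · simp only [mem_filter, and_imp]
    exact fun a _ hda => Nat.mul_div_cancel' hda
  · exact fun b _ => Nat.mul_div_cancel_left b hd
  · simp only [mem_filter, and_imp]
    exact fun a _ hda => by rw [Nat.mul_div_cancel' hda]

theorem ramanujanSum_eq_sum_moebius (q : ℕ) (h : ℤ) :
    ramanujanSum q h =
      ∑ d ∈ q.divisors, (μ d : ℂ) * ∑ b ∈ Icc 1 (q / d), e (b * h / (q / d : ℕ)) := by
  rcases eq_or_ne q 0 with rfl | hq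
  · simp [ramanujanSum]
  have hcoprime (a : ℕ) :
      (if a.gcd q = 1 then (1 : ℂ) else 0) = ∑ d ∈ q.divisors with d ∣ a, (μ d : ℂ) := by
    rw [← sum_divisors_moebius, ← Nat.divisors_filter_dvd_of_dvd hq (Nat.gcd_dvd_right a q)]
    refine sum_congr (filter_congr fun d hd => ?_) fun _ _ => rfl
    rw [Nat.dvd_gcd_iff, and_iff_left (Nat.dvd_of_mem_divisors hd)]
  calc ramanujanSum q h
      = ∑ a ∈ Icc 1 q, ∑ d ∈ q.divisors with d ∣ a, (μ d : ℂ) * e (a * h / q) := by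
        rw [ramanujanSum, sum_filter]
        refine sum_congr rfl fun a _ => ?_
        rw [← sum_mul, ← hcoprime, ite_mul, one_mul, zero_mul]
    _ = ∑ d ∈ q.divisors, (μ d : ℂ) * ∑ a ∈ Icc 1 q with d ∣ a, e (a * h / q) := by
        simp only [sum_filter, mul_sum, mul_ite, mul_zero]
        exact sum_comm
    _ = _ := by
        refine sum_congr rfl fun d hd => ?_
        rw [sum_Icc_filter_dvd _ (Nat.pos_of_mem_divisors hd)]
        have hd0 : (d : ℝ) ≠ 0 := Nat.cast_ne_zero.mpr (Nat.pos_of_mem_divisors hd).ne'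
        congr 2 with b
        rw [Nat.cast_div (Nat.dvd_of_mem_divisors hd) hd0]
        push_cast
        field_simp

theorem norm_ramanujanSum_le (q : ℕ) (h : ℤ) :
    ‖ramanujanSum q h‖ ≤ ∑ m ∈ (q.gcd h.natAbs).divisors, (m : ℝ) := by
  rcases eq_or_ne q 0 with rfl | hq
  · rw [show ramanujanSum 0 h = 0 by simp [ramanujanSum], norm_zero]
    positivity
  rw [ramanujanSum_eq_sum_moebius]
  calc _ ≤ ∑ d ∈ q.divisors, ‖∑ b ∈ Icc 1 (q / d), e (b * h / (q / d : ℕ))‖ := by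
        refine (norm_sum_le _ _).trans (sum_le_sum fun d _ => ?_)
        rw [norm_mul, Complex.norm_intCast]
        exact mul_le_of_le_one_left (norm_nonneg _) (by exact_mod_cast abs_moebius_le_one)
    _ = ∑ d ∈ q.divisors, if q / d ∣ h.natAbs then ((q / d : ℕ) : ℝ) else 0 := by
        refine sum_congr rfl fun d hd => ?_
        rw [sum_Icc_e_mul_div (Nat.div_ne_zero_iff_of_dvd (Nat.dvd_of_mem_divisors hd) |>.mpr
          ⟨hq, (Nat.pos_of_mem_divisors hd).ne'⟩)]
        simp only [Int.natCast_dvd]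
        split_ifs <;> simp
    _ = ∑ m ∈ q.divisors with m ∣ h.natAbs, (m : ℝ) := by
        rw [Nat.sum_div_divisors q (fun m => if m ∣ h.natAbs then (m : ℝ) else 0), sum_filter]
    _ = _ := by
        congr 1
        ext m
        simp [Nat.dvd_gcd_iff, hq]

theorem Nat.two_pow_card_primeFactors_le_card_divisors {n : ℕ} (hn : n ≠ 0) :
    2 ^ #n.primeFactors ≤ #n.divisors := by
  rw [Nat.card_divisors hn, ← prod_const]
  exact prod_le_prod' fun p hp => by
    have := (Nat.prime_of_mem_primeFactors hp).factorization_pos_of_dvd hn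
      (Nat.dvd_of_mem_primeFactors hp)
    omega

theorem Nat.le_totient_mul_card_divisors (n : ℕ) : n ≤ n.totient * #n.divisors := by
  rcases eq_or_ne n 0 with rfl | hn
  · simp
  have hpos : 0 < ∏ p ∈ n.primeFactors, (p - 1) :=
    prod_pos fun p hp => Nat.sub_pos_of_lt (Nat.prime_of_mem_primeFactors hp).one_lt
  have hprod : ∏ p ∈ n.primeFactors, p ≤ 2 ^ #n.primeFactors * ∏ p ∈ n.primeFactors, (p - 1) := by
    rw [← prod_const, ← prod_mul_distrib]
    exact prod_le_prod' fun p hp => by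
      have := (Nat.prime_of_mem_primeFactors hp).two_le
      omega
  refine le_trans (Nat.le_of_mul_le_mul_right ?_ hpos)
    (Nat.mul_le_mul_left _ (Nat.two_pow_card_primeFactors_le_card_divisors hn))
  calc n * ∏ p ∈ n.primeFactors, (p - 1)
      = n.totient * ∏ p ∈ n.primeFactors, p := (Nat.totient_mul_prod_primeFactors n).symm
    _ ≤ n.totient * (2 ^ #n.primeFactors * ∏ p ∈ n.primeFactors, (p - 1)) := by gcongr
    _ = _ := by ring

theorem zeta_pow_apply_le (k n : ℕ) : (ζ ^ k : ArithmeticFunction ℕ) n ≤ #n.divisors ^ k := by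
  induction k generalizing n with
  | zero => simp only [pow_zero, one_apply]; split_ifs <;> simp
  | succ k ih =>
    rw [pow_succ', zeta_mul_apply, pow_succ', ← smul_eq_mul, ← sum_const]
    refine sum_le_sum fun d hd => (ih d).trans (Nat.pow_le_pow_left (card_le_card ?_) k)
    exact Nat.divisors_subset_of_dvd (Nat.ne_zero_of_mem_divisors hd) (Nat.dvd_of_mem_divisors hd)

theorem add_one_mul_min_le_rpow (a : ℕ) {x ε t : ℝ} (hx : 0 < x)
    (htx : t ≤ ε * Real.log x) : (a + 1 : ℝ) * min 1 t ≤ x ^ (a * ε) := by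
  have h1 : min 1 t ≤ 1 := min_le_left 1 t
  have h2 : min 1 t ≤ t := min_le_right 1 t
  have ha : (0 : ℝ) ≤ a := a.cast_nonneg
  calc (a + 1 : ℝ) * min 1 t ≤ a * (ε * Real.log x) + 1 := by nlinarith
    _ ≤ Real.exp (a * (ε * Real.log x)) := Real.add_one_le_exp _
    _ = x ^ (a * ε) := by rw [Real.rpow_def_of_pos hx]; ring_nf

theorem Nat.rpow_eq_prod_primeFactors {n : ℕ} (hn : n ≠ 0) (ε : ℝ) :
    (n : ℝ) ^ ε = ∏ p ∈ n.primeFactors, (p : ℝ) ^ (n.factorization p * ε) := by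
  conv_lhs => rw [← Nat.prod_factorization_pow_eq_self hn]
  rw [Finsupp.prod, Nat.support_factorization, Nat.cast_prod,
    ← Real.finsetProd_rpow _ _ fun p _ => by positivity]
  refine prod_congr rfl fun p _ => ?_
  rw [Nat.cast_pow, ← Real.rpow_natCast, ← Real.rpow_mul p.cast_nonneg]

theorem Nat.card_divisors_le_mul_rpow {ε : ℝ} (hε : 0 < ε) :
    ∃ A : ℝ, 0 < A ∧ ∀ n : ℕ, (#n.divisors : ℝ) ≤ A * (n : ℝ) ^ ε := by
  set c := min 1 (ε * Real.log 2)
  have hc : 0 < c := lt_min one_pos (by positivity)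
  set N := ⌈Real.exp ε⁻¹⌉₊
  refine ⟨c⁻¹ ^ N, by positivity, fun n => ?_⟩
  rcases eq_or_ne n 0 with rfl | hn
  · simp only [CharP.cast_eq_zero, Nat.divisors_zero, card_empty]
    positivity
  -- `a + 1 ≤ p ^ (a * ε)` once `1 ≤ ε * log p`, so only the primes below `N ≥ exp ε⁻¹` cost `c⁻¹`.
  have hfactor : ∀ p ∈ n.primeFactors, (n.factorization p + 1 : ℝ) ≤
      (if p < N then c⁻¹ else 1) * (p : ℝ) ^ (n.factorization p * ε) := by
    intro p hp
    have hp2 : (2 : ℝ) ≤ p := by exact_mod_cast (Nat.prime_of_mem_primeFactors hp).two_le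
    have hp0 : (0 : ℝ) < p := by linarith
    split_ifs with hpN
    · rw [← div_eq_inv_mul, le_div_iff₀ hc]
      refine add_one_mul_min_le_rpow _ hp0 ?_
      gcongr
    · have h1 : 1 ≤ ε * Real.log p := by
        rw [← div_le_iff₀' hε, one_div, ← Real.exp_le_exp, Real.exp_log hp0]
        exact (Nat.le_ceil _).trans (by exact_mod_cast not_lt.mp hpN)
      simpa using add_one_mul_min_le_rpow (n.factorization p) hp0 h1
  have hsmall : #{p ∈ n.primeFactors | p < N} ≤ N :=
    (card_le_card fun p hp => mem_range.mpr (mem_filter.mp hp).2).trans (card_range N).le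
  calc (#n.divisors : ℝ) = ∏ p ∈ n.primeFactors, (n.factorization p + 1 : ℝ) := by
        rw [Nat.card_divisors hn]; push_cast; rfl
    _ ≤ ∏ p ∈ n.primeFactors, (if p < N then c⁻¹ else 1) * (p : ℝ) ^ (n.factorization p * ε) :=
        prod_le_prod (fun _ _ => by positivity) hfactor
    _ = c⁻¹ ^ #{p ∈ n.primeFactors | p < N} * n ^ ε := by
        rw [prod_mul_distrib, ← Nat.rpow_eq_prod_primeFactors hn, prod_ite, prod_const,
          prod_const, one_pow, mul_one]
    _ ≤ c⁻¹ ^ N * n ^ ε := by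
        gcongr
        exact one_le_inv_iff₀.mpr ⟨hc, min_le_left _ _⟩

noncomputable def totientWeight (k : ℕ) (C : ℝ) (q : ℕ) : ℝ :=
  ∑ x ∈ q.divisorsAntidiagonal,
    ((μ x.2 : ℝ) ^ 2 * (((ζ ^ k) q : ℕ) : ℝ) ^ C) / ((x.1 : ℝ) * (x.2.totient : ℝ))

theorem totientWeight_le {C : ℝ} (hC : 0 ≤ C) (k q : ℕ) :
    totientWeight k C q ≤ (#q.divisors : ℝ) ^ (k * C + 2) / q := by
  rcases eq_or_ne q 0 with rfl | hq
  · simp [totientWeight]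
  set D : ℝ := ((#q.divisors : ℕ) : ℝ) with hD_def
  set X : ℝ := (((ζ ^ k) q : ℕ) : ℝ) ^ C
  have hq0 : (0 : ℝ) < q := by positivity
  have hD : 0 < D := by simpa [D] using hq
  have hX : 0 ≤ X := by positivity
  have hterm : ∀ x ∈ q.divisorsAntidiagonal,
      (μ x.2 : ℝ) ^ 2 * X / (x.1 * x.2.totient) ≤ X * D / q := by
    intro x hx
    have hx' : x.1 * x.2 = q := (Nat.mem_divisorsAntidiagonal.mp hx).1
    have hx0 := Nat.ne_zero_of_mem_divisorsAntidiagonal hx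
    have hden : 0 < (x.1 : ℝ) * x.2.totient := by
      have := Nat.totient_pos.mpr (Nat.pos_of_ne_zero hx0.2)
      have := Nat.pos_of_ne_zero hx0.1
      positivity
    have hμ : (μ x.2 : ℝ) ^ 2 ≤ 1 := by
      exact_mod_cast (sq_le_one_iff_abs_le_one _).mpr abs_moebius_le_one
    have hq_le : (q : ℝ) ≤ x.1 * x.2.totient * D := by
      have : q ≤ x.1 * x.2.totient * #q.divisors := calc
        q = x.1 * x.2 := hx'.symm
        _ ≤ x.1 * (x.2.totient * #x.2.divisors) := by
          gcongr; exact Nat.le_totient_mul_card_divisors _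
        _ ≤ x.1 * (x.2.totient * #q.divisors) := by
          gcongr; exact Dvd.intro_left _ hx'
        _ = _ := by ring
      rw [hD_def]
      exact_mod_cast this
    calc (μ x.2 : ℝ) ^ 2 * X / (x.1 * x.2.totient) ≤ X / (x.1 * x.2.totient) := by
          gcongr; exact mul_le_of_le_one_left hX hμ
      _ ≤ X * D / q := by
          rw [div_le_div_iff₀ hden hq0]
          nlinarith
  have hXD : X ≤ D ^ (k * C) := calc
    X ≤ (D ^ k) ^ C := Real.rpow_le_rpow (by positivity)
      (by rw [hD_def]; exact_mod_cast zeta_pow_apply_le k q) hC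
    _ = D ^ (k * C) := by rw [← Real.rpow_natCast, ← Real.rpow_mul hD.le]
  calc totientWeight k C q ≤ ∑ _x ∈ q.divisorsAntidiagonal, X * D / q := sum_le_sum hterm
    _ = D * (X * D / q) := by
        rw [sum_const, ← Nat.map_div_right_divisors, card_map, nsmul_eq_mul]
    _ ≤ D * (D ^ (k * C) * D / q) := by gcongr
    _ = D ^ (k * C + 2) / q := by rw [Real.rpow_add hD, Real.rpow_two]; ring

theorem exists_totientWeight_le_rpow {C : ℝ} (hC : 0 ≤ C) (k : ℕ) {δ : ℝ} (hδ : 0 < δ) :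
    ∃ B : ℝ, 0 < B ∧ ∀ q : ℕ, totientWeight k C q ≤ B * (q : ℝ) ^ (δ - 1) := by
  have hE : 0 < (k : ℝ) * C + 2 := by positivity
  obtain ⟨A, hA, hdiv⟩ := Nat.card_divisors_le_mul_rpow (div_pos hδ hE)
  refine ⟨A ^ ((k : ℝ) * C + 2), by positivity, fun q => ?_⟩
  rcases eq_or_ne q 0 with rfl | hq
  · simp only [totientWeight, Nat.divisorsAntidiagonal_zero, sum_empty]
    positivity
  calc totientWeight k C q ≤ (#q.divisors : ℝ) ^ (k * C + 2) / q := totientWeight_le hC k q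
    _ ≤ (A * q ^ (δ / (k * C + 2))) ^ (k * C + 2) / q := by gcongr; exact hdiv q
    _ = A ^ ((k : ℝ) * C + 2) * (q : ℝ) ^ (δ - 1) := by
        rw [Real.mul_rpow hA.le (by positivity), ← Real.rpow_mul (by positivity),
          div_mul_cancel₀ _ hE.ne', Real.rpow_sub_one (Nat.cast_ne_zero.mpr hq), mul_div_assoc]

theorem hasSum_rpow_neg_mul_sum_divisors_gcd {s : ℝ} (hs : 1 < s) {H : ℕ} (hH : H ≠ 0) :
    HasSum (fun q : ℕ => (q : ℝ) ^ (-s) * ∑ m ∈ (q.gcd H).divisors, (m : ℝ))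
      ((∑' j : ℕ, (j : ℝ) ^ (-s)) * ∑ d ∈ H.divisors, (d : ℝ) ^ (1 - s)) := by
  have hgcd (q : ℕ) : ∑ m ∈ (q.gcd H).divisors, (m : ℝ) =
      ∑ m ∈ H.divisors, if m ∣ q then (m : ℝ) else 0 := by
    rw [← sum_filter]
    congr 1
    ext m
    simp [Nat.dvd_gcd_iff, hH, and_comm]
  simp only [hgcd, mul_sum]
  refine hasSum_sum fun d hd => ?_
  have hd0 : 0 < d := Nat.pos_of_mem_divisors hd
  rw [← (mul_right_injective₀ hd0.ne').hasSum_iff]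
  · have hterm (j : ℕ) : ((d * j : ℕ) : ℝ) ^ (-s) * (if d ∣ d * j then (d : ℝ) else 0) =
        (j : ℝ) ^ (-s) * (d : ℝ) ^ (1 - s) := by
      rw [if_pos (dvd_mul_right d j), Nat.cast_mul, Real.mul_rpow d.cast_nonneg j.cast_nonneg,
        Real.rpow_sub (by positivity), Real.rpow_one, Real.rpow_neg d.cast_nonneg]
      ring
    rw [show _ ∘ _ = _ from funext hterm]
    exact (Real.summable_nat_rpow.mpr (neg_lt_neg hs)).hasSum.mul_right _
  · rintro q hq
    rw [if_neg fun ⟨j, hj⟩ => hq ⟨j, hj.symm⟩, mul_zero]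

theorem ramanujan_weighted_series_general (k : ℕ) (Ck : ℝ) (hCk : 0 < Ck) :
    ∃ C : ℝ, 0 < C ∧ ∀ h : ℤ, h ≠ 0 →
      Summable (fun q : ℕ => ‖ramanujanSum q h‖ *
        (∑ x ∈ q.divisorsAntidiagonal,
          ((μ x.2 : ℝ) ^ 2 * (((ζ ^ k) q : ℕ) : ℝ) ^ Ck) / ((x.1 : ℝ) * (x.2.totient : ℝ))) ^ 2) ∧
      (∑' q : ℕ, ‖ramanujanSum q h‖ *
        (∑ x ∈ q.divisorsAntidiagonal,
          ((μ x.2 : ℝ) ^ 2 * (((ζ ^ k) q : ℕ) : ℝ) ^ Ck) / ((x.1 : ℝ) * (x.2.totient : ℝ))) ^ 2)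
        ≤ C * ∑ d ∈ h.natAbs.divisors, (d : ℝ) ^ (-(9/10 : ℝ)) := by
  obtain ⟨B, hB, hW⟩ := exists_totientWeight_le_rpow hCk.le k (δ := 1 / 20) (by norm_num)
  set Z := ∑' j : ℕ, (j : ℝ) ^ (-(19 / 10) : ℝ)
  have hZ : 0 < Z := (Real.summable_nat_rpow.mpr (by norm_num)).tsum_pos
    (fun j => by positivity) 1 (by norm_num)
  refine ⟨B ^ 2 * Z, by positivity, fun h hh => ?_⟩
  have hsum := (hasSum_rpow_neg_mul_sum_divisors_gcd (s := 19 / 10) (by norm_num)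
    (Int.natAbs_ne_zero.mpr hh)).mul_left (B ^ 2)
  have hbound (q : ℕ) : ‖ramanujanSum q h‖ * totientWeight k Ck q ^ 2 ≤
      B ^ 2 * ((q : ℝ) ^ (-(19 / 10) : ℝ) * ∑ m ∈ (q.gcd h.natAbs).divisors, (m : ℝ)) := by
    have hW2 : totientWeight k Ck q ^ 2 ≤ B ^ 2 * (q : ℝ) ^ (-(19 / 10) : ℝ) := calc
      totientWeight k Ck q ^ 2 ≤ (B * (q : ℝ) ^ (1 / 20 - 1 : ℝ)) ^ 2 :=
        pow_le_pow_left₀ (sum_nonneg fun _ _ => by positivity) (hW q) 2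
      _ = B ^ 2 * (q : ℝ) ^ (-(19 / 10) : ℝ) := by
        rw [mul_pow, ← Real.rpow_mul_natCast (Nat.cast_nonneg q)]
        norm_num
    calc ‖ramanujanSum q h‖ * totientWeight k Ck q ^ 2
        ≤ (∑ m ∈ (q.gcd h.natAbs).divisors, (m : ℝ)) * (B ^ 2 * (q : ℝ) ^ (-(19 / 10) : ℝ)) :=
          mul_le_mul (norm_ramanujanSum_le q h) hW2 (sq_nonneg _) (by positivity)
      _ = _ := by ring
  have hnonneg (q : ℕ) : 0 ≤ ‖ramanujanSum q h‖ * totientWeight k Ck q ^ 2 := by positivity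
  have hsummable := hsum.summable.of_nonneg_of_le hnonneg hbound
  refine ⟨hsummable, ?_⟩
  calc ∑' q : ℕ, ‖ramanujanSum q h‖ * totientWeight k Ck q ^ 2
      ≤ B ^ 2 * (Z * ∑ d ∈ h.natAbs.divisors, (d : ℝ) ^ (1 - 19 / 10 : ℝ)) :=
        (hsummable.tsum_le_tsum hbound hsum.summable).trans_eq hsum.tsum_eq
    _ = B ^ 2 * Z * ∑ d ∈ h.natAbs.divisors, (d : ℝ) ^ (-(9 / 10) : ℝ) := by norm_num [mul_assoc]

/-- For `k ≥ 2`, `C_k > 0`, the series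
`∑_q |c_q(h)| (∑_{q₀q₁=q} μ(q₁)² d_k(q)^{C_k} / (q₀ φ(q₁)))²` converges for every
nonzero `h` and its value is `O(∑_{d ∣ |h|} d^{-9/10})` uniformly in `h`. -/
theorem ramanujan_weighted_series (k : ℕ) (hk : 2 ≤ k) (Ck : ℝ) (hCk : 0 < Ck) :
    ∃ C : ℝ, 0 < C ∧ ∀ h : ℤ, h ≠ 0 →
      Summable (fun q : ℕ => ‖ramanujanSum q h‖ *
        (∑ x ∈ q.divisorsAntidiagonal,
          ((μ x.2 : ℝ) ^ 2 * (((ζ ^ k) q : ℕ) : ℝ) ^ Ck) / ((x.1 : ℝ) * (x.2.totient : ℝ))) ^ 2) ∧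
      (∑' q : ℕ, ‖ramanujanSum q h‖ *
        (∑ x ∈ q.divisorsAntidiagonal,
          ((μ x.2 : ℝ) ^ 2 * (((ζ ^ k) q : ℕ) : ℝ) ^ Ck) / ((x.1 : ℝ) * (x.2.totient : ℝ))) ^ 2)
        ≤ C * ∑ d ∈ h.natAbs.divisors, (d : ℝ) ^ (-(9/10 : ℝ)) :=
  ramanujan_weighted_series_general k Ck hCk
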